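/- The Goemans–Williamson constant α = (2/π) · inf_{θ ∈ (0, π]} θ/(1 − cos θ) satisfies 0.87856 < α < 0.87857. -/

import Mathlib

/-!
Write `m` for the infimum, so that `α = 2m/π`. The upper bound is the value of `θ/(1 − cos θ)` at
`θ₀ = 2.3311`, next to the minimiser. For the lower bound we show `1.38004 (1 − cos θ) ≤ θ` on
`[0, π]`: on `[0, π/2]` it follows from Jordan's inequality `1 − cos θ ≤ 2θ/π`, and on `[π/2, π]`,
where `cos` is convex, from the tangent line of `cos` at `θ₀`. The values of `cos` and `sin` at `θ₀`
are pinned down by the alternating Taylor bounds, obtained by integrating `cos ≤ 1` repeatedly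
from `0`.
-/

/-- The Goemans-Williamson constant `α = (2/π) · inf_{θ ∈ (0, π]} θ/(1 − cos θ)`. -/
noncomputable def gwAlpha : ℝ :=
  (2 / Real.pi) * ⨅ θ : Set.Ioc (0 : ℝ) Real.pi, (θ : ℝ) / (1 - Real.cos θ)

open Real Set
open scoped Nat

noncomputable def cosTaylor (n : ℕ) (x : ℝ) : ℝ :=
  ∑ i ∈ Finset.range n, (-1) ^ i * (x ^ (2 * i) / (2 * i)!)

noncomputable def sinTaylor (n : ℕ) (x : ℝ) : ℝ :=
  ∑ i ∈ Finset.range n, (-1) ^ i * (x ^ (2 * i + 1) / (2 * i + 1)!)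

lemma hasDerivAt_pow_succ_div_factorial (k : ℕ) (x : ℝ) :
    HasDerivAt (fun y : ℝ => y ^ (k + 1) / (k + 1)!) (x ^ k / k !) x := by
  refine ((hasDerivAt_pow (k + 1) x).div_const ((k + 1)! : ℝ)).congr_deriv ?_
  rw [Nat.factorial_succ]
  push_cast
  field_simp

lemma hasDerivAt_sinTaylor (n : ℕ) (x : ℝ) : HasDerivAt (sinTaylor n) (cosTaylor n x) x := by
  unfold sinTaylor cosTaylor
  exact HasDerivAt.fun_sum fun i _ => (hasDerivAt_pow_succ_div_factorial (2 * i) x).const_mul _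

lemma cosTaylor_succ (n : ℕ) (x : ℝ) :
    cosTaylor (n + 1) x =
      1 - ∑ i ∈ Finset.range n, (-1) ^ i * (x ^ (2 * i + 1 + 1) / (2 * i + 1 + 1)!) := by
  rw [cosTaylor, Finset.sum_range_succ', sub_eq_neg_add, ← Finset.sum_neg_distrib]
  simp [pow_succ, mul_add]

lemma hasDerivAt_cosTaylor (n : ℕ) (x : ℝ) :
    HasDerivAt (cosTaylor (n + 1)) (-sinTaylor n x) x := by
  rw [funext (cosTaylor_succ n), sinTaylor, ← zero_sub]
  exact (HasDerivAt.fun_sum fun i _ =>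
    (hasDerivAt_pow_succ_div_factorial (2 * i + 1) x).const_mul _).const_sub 1

lemma nonneg_of_hasDerivAt_nonneg {u u' : ℝ → ℝ} (hu : ∀ x, HasDerivAt u (u' x) x)
    (hu₀ : u 0 = 0) (hu' : ∀ x, 0 ≤ x → 0 ≤ u' x) {x : ℝ} (hx : 0 ≤ x) : 0 ≤ u x := by
  have hmono : MonotoneOn u (Ici 0) :=
    monotoneOn_of_hasDerivWithinAt_nonneg (convex_Ici 0)
      (fun y _ => (hu y).continuousAt.continuousWithinAt) (fun y _ => (hu y).hasDerivWithinAt)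
      (fun y hy => hu' y (interior_subset hy))
  simpa [hu₀] using hmono self_mem_Ici hx hx

lemma sinTaylor_bound_of_cosTaylor_bound {n : ℕ}
    (hcos : ∀ x, 0 ≤ x → 0 ≤ (-1) ^ n * (cos x - cosTaylor n x)) {x : ℝ} (hx : 0 ≤ x) :
    0 ≤ (-1) ^ n * (sin x - sinTaylor n x) :=
  nonneg_of_hasDerivAt_nonneg
    (fun y => ((hasDerivAt_sin y).sub (hasDerivAt_sinTaylor n y)).const_mul _)
    (by simp [sinTaylor]) hcos hx

lemma cosTaylor_bound_succ_of_sinTaylor_bound {n : ℕ}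
    (hsin : ∀ x, 0 ≤ x → 0 ≤ (-1) ^ n * (sin x - sinTaylor n x)) {x : ℝ} (hx : 0 ≤ x) :
    0 ≤ (-1) ^ (n + 1) * (cos x - cosTaylor (n + 1) x) := by
  refine nonneg_of_hasDerivAt_nonneg
    (u := fun y => (-1) ^ (n + 1) * (cos y - cosTaylor (n + 1) y))
    (fun y => ?_) (by simp [cosTaylor_succ]) hsin hx
  exact (((hasDerivAt_cos y).fun_sub (hasDerivAt_cosTaylor n y)).const_mul _).congr_deriv
    (by ring)

theorem cosTaylor_bound (n : ℕ) {x : ℝ} (hx : 0 ≤ x) :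
    0 ≤ (-1) ^ (n + 1) * (cos x - cosTaylor (n + 1) x) := by
  induction n generalizing x with
  | zero => simpa [cosTaylor] using cos_le_one x
  | succ n ih =>
    exact cosTaylor_bound_succ_of_sinTaylor_bound
      (fun _ hy => sinTaylor_bound_of_cosTaylor_bound (fun _ hz => ih hz) hy) hx

theorem sinTaylor_bound (n : ℕ) {x : ℝ} (hx : 0 ≤ x) :
    0 ≤ (-1) ^ (n + 1) * (sin x - sinTaylor (n + 1) x) :=
  sinTaylor_bound_of_cosTaylor_bound (fun _ hy => cosTaylor_bound n hy) hx

lemma cos_2_3311_mem : cos 2.3311 ∈ Ioo (-0.68914157) (-0.68914152) := by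
  have lower := cosTaylor_bound 7 (x := 2.3311) (by norm_num)
  have upper := cosTaylor_bound 8 (x := 2.3311) (by norm_num)
  norm_num [cosTaylor, Finset.sum_range_succ, Nat.factorial] at lower upper
  constructor <;> linarith

lemma sin_2_3311_mem : sin 2.3311 ∈ Ioo 0.72462676 0.72462678 := by
  have lower := sinTaylor_bound 7 (x := 2.3311) (by norm_num)
  have upper := sinTaylor_bound 8 (x := 2.3311) (by norm_num)
  norm_num [sinTaylor, Finset.sum_range_succ, Nat.factorial] at lower upper
  constructor <;> linarith

lemma ConvexOn.add_mul_sub_le_of_hasDerivAt {S : Set ℝ} {f : ℝ → ℝ} {x y f' : ℝ}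
    (hf : ConvexOn ℝ S f) (hx : x ∈ S) (hy : y ∈ S) (hd : HasDerivAt f f' x) :
    f x + f' * (y - x) ≤ f y := by
  rcases lt_trichotomy x y with hxy | rfl | hyx
  · have h := hf.le_slope_of_hasDerivAt hx hy hxy hd
    rw [slope_def_field, le_div_iff₀ (sub_pos.2 hxy)] at h
    linarith
  · simp
  · have h := hf.slope_le_of_hasDerivAt hy hx hyx hd
    rw [slope_def_field, div_le_iff₀ (sub_pos.2 hyx)] at h
    linarith

theorem strictConvexOn_cos_Icc : StrictConvexOn ℝ (Icc (π / 2) (π + π / 2)) cos :=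
  strictConvexOn_of_deriv2_pos (convex_Icc _ _) continuousOn_cos fun x hx => by
    rw [interior_Icc] at hx
    simp [cos_neg_of_pi_div_two_lt_of_lt hx.1 hx.2]

lemma cos_sub_sin_mul_le_cos {a θ : ℝ} (ha : a ∈ Icc (π / 2) (π + π / 2))
    (hθ : θ ∈ Icc (π / 2) (π + π / 2)) : cos a - sin a * (θ - a) ≤ cos θ := by
  simpa [sub_eq_add_neg] using
    strictConvexOn_cos_Icc.convexOn.add_mul_sub_le_of_hasDerivAt ha hθ (hasDerivAt_cos a)

lemma mul_one_sub_cos_le_of_le_pi_div_two {c θ : ℝ} (hc₀ : 0 ≤ c) (hc : c ≤ π / 2)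
    (hθ₀ : 0 ≤ θ) (hθ : θ ≤ π / 2) : c * (1 - cos θ) ≤ θ :=
  calc c * (1 - cos θ) ≤ c * (2 / π * θ) := by
        gcongr
        linarith [one_sub_mul_le_cos hθ₀ hθ]
    _ ≤ π / 2 * (2 / π * θ) := by gcongr
    _ = θ := by field_simp

lemma mul_one_sub_cos_le_of_pi_div_two_le {θ : ℝ} (hθ₀ : π / 2 ≤ θ) (hθ : θ ≤ π) :
    1.38004 * (1 - cos θ) ≤ θ := by
  have hπ₀ := pi_gt_d6
  have hπ₁ := pi_lt_d6
  -- `2.3311` is within `2·10⁻⁵` of the minimum of `θ - 1.38004 (1 - cos θ)`, so the tangent line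
  -- of `cos` there still leaves a margin of `6·10⁻⁶` at `θ = π`.
  have htangent := cos_sub_sin_mul_le_cos (a := 2.3311) ⟨by linarith, by linarith⟩
    ⟨hθ₀, by linarith⟩
  obtain ⟨hc₀, -⟩ := cos_2_3311_mem
  obtain ⟨hs₀, hs₁⟩ := sin_2_3311_mem
  nlinarith [mul_nonneg (sub_nonneg.2 hs₀.le) (sub_nonneg.2 hθ),
    mul_nonneg (sub_nonneg.2 hs₁.le) (sub_nonneg.2 hθ₀)]

lemma mul_one_sub_cos_le {θ : ℝ} (hθ₀ : 0 ≤ θ) (hθ : θ ≤ π) : 1.38004 * (1 - cos θ) ≤ θ := by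
  rcases le_total θ (π / 2) with hθ' | hθ'
  · exact mul_one_sub_cos_le_of_le_pi_div_two (by norm_num) (by linarith [pi_gt_d2]) hθ₀ hθ'
  · exact mul_one_sub_cos_le_of_pi_div_two_le hθ' hθ

lemma one_sub_cos_pos {θ : ℝ} (hθ : θ ∈ Ioc 0 π) : 0 < 1 - cos θ := by
  simpa using cos_lt_cos_of_nonneg_of_le_pi le_rfl hθ.2 hθ.1

lemma le_div_one_sub_cos {θ : ℝ} (hθ : θ ∈ Ioc 0 π) : 1.38004 ≤ θ / (1 - cos θ) :=
  (le_div_iff₀ (one_sub_cos_pos hθ)).2 (mul_one_sub_cos_le hθ.1.le hθ.2)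

lemma div_one_sub_cos_2_3311_lt : 2.3311 / (1 - cos 2.3311) < 1.380051 := by
  rw [div_lt_iff₀ (by linarith [cos_2_3311_mem.2])]
  linarith [cos_2_3311_mem.2]

theorem gwAlpha_bounds : 0.87856 < gwAlpha ∧ gwAlpha < 0.87857 := by
  have hθ₀ : (2.3311 : ℝ) ∈ Ioc 0 π := ⟨by norm_num, by linarith [pi_gt_d2]⟩
  have : Nonempty (Ioc (0 : ℝ) π) := ⟨⟨_, hθ₀⟩⟩
  have hlower : 1.38004 ≤ ⨅ θ : Ioc (0 : ℝ) π, (θ : ℝ) / (1 - cos θ) :=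
    le_ciInf fun θ => le_div_one_sub_cos θ.2
  have hupper : ⨅ θ : Ioc (0 : ℝ) π, (θ : ℝ) / (1 - cos θ) < 1.380051 :=
    (ciInf_le ⟨1.38004, forall_mem_range.2 fun θ => le_div_one_sub_cos θ.2⟩ ⟨_, hθ₀⟩).trans_lt
      div_one_sub_cos_2_3311_lt
  have hπ₀ := pi_gt_d6
  have hπ₁ := pi_lt_d6
  rw [gwAlpha, div_mul_eq_mul_div, lt_div_iff₀ pi_pos, div_lt_iff₀ pi_pos]
  constructor <;> linarith
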